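/- arXiv:2012.03024 — 2 statements merged into one kernel-verified Lean document; each statement's English description precedes it below -/
import Mathlib

section
/- A real 3×3 matrix A with invariants d₁ = tr A, d₂ = sum of principal 2×2 minors, d₃ = det A has a pair of nonzero purely imaginary eigenvalues ±iω (ω > 0) if and only if d₃ = d₁d₂ and d₂ > 0. -/
/-!
The characteristic polynomial of `A` is `λ³ - d₁λ² + d₂λ - d₃`. At `λ = iω` with `ω` real and
nonzero its value is `(d₁ω² - d₃) + iω(d₂ - ω²)`, so `±iω` are roots exactly when `d₂ = ω²` and
`d₃ = d₁ω²`; such an `ω` exists iff `d₂ > 0` and `d₃ = d₁d₂`.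
-/

open Polynomial Complex

theorem Matrix.charpoly_fin_three {R : Type*} [CommRing R] (A : Matrix (Fin 3) (Fin 3) R) :
    A.charpoly = X ^ 3 - C A.trace * X ^ 2 +
      C ((A 0 0 * A 1 1 - A 0 1 * A 1 0) + (A 0 0 * A 2 2 - A 0 2 * A 2 0) +
        (A 1 1 * A 2 2 - A 1 2 * A 2 1)) * X - C A.det := by
  simp only [Matrix.charpoly, Matrix.det_fin_three, Matrix.trace_fin_three, Matrix.charmatrix_apply,
    Matrix.diagonal_apply, Fin.reduceEq, Fin.isValue, ↓reduceIte, zero_sub, map_add, map_sub, map_mul]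
  ring

theorem Complex.I_mul_ofReal_cubic_eq_zero_iff {a b c ω : ℝ} (hω : ω ≠ 0) :
    (I * ω) ^ 3 - a * (I * ω) ^ 2 + b * (I * ω) - c = 0 ↔ b = ω ^ 2 ∧ c = a * ω ^ 2 := by
  have hsplit : (I * ω) ^ 3 - a * (I * ω) ^ 2 + b * (I * ω) - c =
      ((a * ω ^ 2 - c : ℝ) : ℂ) + ((ω * (b - ω ^ 2) : ℝ) : ℂ) * I := by
    push_cast; linear_combination ((ω:ℂ) ^ 3 * I - a * (ω:ℂ) ^ 2) * I_sq
  rw [hsplit, Complex.ext_iff]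
  simp only [add_re, add_im, ofReal_re, ofReal_im, mul_re, mul_im, I_re, I_im, zero_re, zero_im,
    mul_zero, mul_one, sub_zero, add_zero, zero_add, mul_eq_zero, hω, false_or, sub_eq_zero]
  exact ⟨fun ⟨hre, him⟩ ↦ ⟨him, hre.symm⟩, fun ⟨hb, hc⟩ ↦ ⟨hc.symm, hb⟩⟩

theorem Matrix.eval_charpoly_map_complex_fin_three (A : Matrix (Fin 3) (Fin 3) ℝ) (x : ℂ) :
    (A.map (algebraMap ℝ ℂ)).charpoly.eval x = x ^ 3 - A.trace * x ^ 2 +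
      ((A 0 0 * A 1 1 - A 0 1 * A 1 0) + (A 0 0 * A 2 2 - A 0 2 * A 2 0) +
        (A 1 1 * A 2 2 - A 1 2 * A 2 1) : ℝ) * x - A.det := by
  rw [Matrix.charpoly_map, A.charpoly_fin_three]
  simp

/-- A real 3×3 matrix with invariants d₁ = trace, d₂ = sum of principal 2×2 minors,
d₃ = determinant has a pair of nonzero purely imaginary eigenvalues ±iω (ω > 0)
iff d₃ = d₁ d₂ and d₂ > 0. -/
theorem stmt_7 (A : Matrix (Fin 3) (Fin 3) ℝ)
    (d₁ d₂ d₃ : ℝ)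
    (h₁ : d₁ = Matrix.trace A)
    (h₂ : d₂ = (A 0 0 * A 1 1 - A 0 1 * A 1 0) + (A 0 0 * A 2 2 - A 0 2 * A 2 0) +
               (A 1 1 * A 2 2 - A 1 2 * A 2 1))
    (h₃ : d₃ = A.det) :
    (∃ ω : ℝ, 0 < ω ∧
        ((A.map (algebraMap ℝ ℂ)).charpoly).IsRoot (Complex.I * ω) ∧
        ((A.map (algebraMap ℝ ℂ)).charpoly).IsRoot (-(Complex.I * ω))) ↔
      d₃ = d₁ * d₂ ∧ 0 < d₂ := by
  have hroot : ∀ ω : ℝ, ω ≠ 0 →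
      ((A.map (algebraMap ℝ ℂ)).charpoly.IsRoot (I * ω) ↔ d₂ = ω ^ 2 ∧ d₃ = d₁ * ω ^ 2) := by
    intro ω hω
    rw [IsRoot, Matrix.eval_charpoly_map_complex_fin_three, ← h₁, ← h₂, ← h₃]
    exact I_mul_ofReal_cubic_eq_zero_iff hω
  constructor
  · rintro ⟨ω, hω, hroot_pos, -⟩
    obtain ⟨hd₂, hd₃⟩ := (hroot ω hω.ne').mp hroot_pos
    subst hd₂
    exact ⟨hd₃, by positivity⟩
  · rintro ⟨hd₃, hd₂⟩
    have hsq : √d₂ ^ 2 = d₂ := Real.sq_sqrt hd₂.le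
    have hω : √d₂ ≠ 0 := (Real.sqrt_pos.mpr hd₂).ne'
    refine ⟨√d₂, Real.sqrt_pos.mpr hd₂, (hroot _ hω).mpr ⟨hsq.symm, by rw [hsq, hd₃]⟩, ?_⟩
    rw [← mul_neg, ← ofReal_neg]
    exact (hroot _ (neg_ne_zero.mpr hω)).mpr ⟨by rw [neg_sq, hsq], by rw [neg_sq, hsq, hd₃]⟩
end

section
/- A real 4×4 matrix A with characteristic polynomial λ⁴ - d₁λ³ + d₂λ² - d₃λ + d₄ and d₁ ≠ 0 has a pair of nonzero purely imaginary eigenvalues ±iω (ω ≠ 0) if and only if d₄d₁² - d₁d₂d₃ + d₃² = 0 and d₁d₃ > 0. -/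
/-!
Write `p` for the characteristic polynomial. Since `p` is real, `iω` is a root iff its conjugate
`-iω` is, and splitting `p(iω) = (ω⁴ - d₂ω² + d₄) + i(d₁ω³ - d₃ω)` into real and imaginary parts
shows that for `ω ≠ 0` this happens iff `s = ω²` satisfies `s² - d₂s + d₄ = 0` and `d₁s = d₃`.
As `d₁ ≠ 0`, such an `s` is forced to be `d₃/d₁`; it is positive iff `d₁d₃ > 0`, and substituting
it into the quadratic (times `d₁²`) gives `d₄d₁² - d₁d₂d₃ + d₃² = 0`.
-/

open Polynomial ComplexConjugate

lemma Polynomial.isRoot_map_complex_conj_iff (p : ℝ[X]) (z : ℂ) :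
    (p.map (algebraMap ℝ ℂ)).IsRoot (conj z) ↔ (p.map (algebraMap ℝ ℂ)).IsRoot z := by
  simp only [IsRoot, eval_map_algebraMap, aeval_conj, map_eq_zero]

lemma Complex.ofReal_add_I_mul_ofReal_eq_zero_iff (a b : ℝ) :
    (a : ℂ) + Complex.I * b = 0 ↔ a = 0 ∧ b = 0 := by
  simp [Complex.ext_iff]

lemma isRoot_map_quartic_I_mul_iff (a b c d ω : ℝ) :
    ((X ^ 4 - C a * X ^ 3 + C b * X ^ 2 - C c * X + C d).map (algebraMap ℝ ℂ)).IsRoot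
        (Complex.I * ω) ↔
      ω ^ 4 - b * ω ^ 2 + d = 0 ∧ a * ω ^ 3 - c * ω = 0 := by
  have heval : ((X ^ 4 - C a * X ^ 3 + C b * X ^ 2 - C c * X + C d).map
      (algebraMap ℝ ℂ)).eval (Complex.I * ω) =
        ((ω ^ 4 - b * ω ^ 2 + d : ℝ) : ℂ) + Complex.I * ((a * ω ^ 3 - c * ω : ℝ) : ℂ) := by
    have hI3 : Complex.I ^ 3 = -Complex.I := by rw [pow_succ, Complex.I_sq]; ring
    have hI4 : Complex.I ^ 4 = 1 := by rw [pow_succ, hI3, neg_mul, Complex.I_mul_I, neg_neg]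
    simp only [eval_map, eval₂_sub, eval₂_add, eval₂_mul, eval₂_pow, eval₂_X, eval₂_C,
      Complex.coe_algebraMap, mul_pow, Complex.I_sq, hI3, hI4]
    push_cast
    ring
  rw [IsRoot, heval, Complex.ofReal_add_I_mul_ofReal_eq_zero_iff]

lemma exists_pos_quadratic_root_of_mul_eq_iff {d₁ d₂ d₃ d₄ : ℝ} (hd₁ : d₁ ≠ 0) :
    (∃ s : ℝ, 0 < s ∧ s ^ 2 - d₂ * s + d₄ = 0 ∧ d₁ * s = d₃) ↔
      d₄ * d₁ ^ 2 - d₁ * d₂ * d₃ + d₃ ^ 2 = 0 ∧ 0 < d₁ * d₃ := by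
  constructor
  · rintro ⟨s, hs, hquad, rfl⟩
    refine ⟨by linear_combination d₁ ^ 2 * hquad, ?_⟩
    rw [← mul_assoc, ← sq]
    exact mul_pos (sq_pos_of_ne_zero hd₁) hs
  · rintro ⟨hquad, hpos⟩
    refine ⟨d₃ / d₁, ?_, ?_, mul_div_cancel₀ d₃ hd₁⟩
    · have : 0 < d₁ * d₃ / d₁ ^ 2 := div_pos hpos (by positivity)
      rwa [sq, mul_div_mul_left _ _ hd₁] at this
    · field_simp
      linear_combination hquad

open Polynomial in
/-- A real 4×4 matrix A with characteristic polynomial λ⁴ - d₁λ³ + d₂λ² - d₃λ + d₄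
and d₁ ≠ 0 has a pair of nonzero purely imaginary eigenvalues ±iω iff
d₄d₁² - d₁d₂d₃ + d₃² = 0 and d₁d₃ > 0. -/
theorem stmt_13 (A : Matrix (Fin 4) (Fin 4) ℝ) (d₁ d₂ d₃ d₄ : ℝ) (hd₁ : d₁ ≠ 0)
    (hchar : Matrix.charpoly A =
      X ^ 4 - C d₁ * X ^ 3 + C d₂ * X ^ 2 - C d₃ * X + C d₄) :
    (∃ ω : ℝ, ω ≠ 0 ∧
        ((A.map (algebraMap ℝ ℂ)).charpoly).IsRoot (Complex.I * ω) ∧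
        ((A.map (algebraMap ℝ ℂ)).charpoly).IsRoot (-(Complex.I * ω))) ↔
      d₄ * d₁ ^ 2 - d₁ * d₂ * d₃ + d₃ ^ 2 = 0 ∧ 0 < d₁ * d₃ := by
  have hconj (ω : ℝ) : -(Complex.I * ω) = conj (Complex.I * ω) := by simp
  simp_rw [Matrix.charpoly_map, hchar, hconj, isRoot_map_complex_conj_iff, and_self,
    isRoot_map_quartic_I_mul_iff, ← exists_pos_quadratic_root_of_mul_eq_iff hd₁]
  constructor
  · rintro ⟨ω, hω, hquartic, hcubic⟩
    exact ⟨ω ^ 2, by positivity, by linear_combination hquartic,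
      mul_right_cancel₀ hω (by linear_combination hcubic)⟩
  · rintro ⟨s, hs, hquad, hlin⟩
    have hsqrt : √s ^ 2 = s := Real.sq_sqrt hs.le
    exact ⟨√s, (Real.sqrt_pos.2 hs).ne',
      by linear_combination hquad + (√s ^ 2 + s - d₂) * hsqrt,
      by linear_combination √s * hlin + d₁ * √s * hsqrt⟩
end
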